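/- arXiv:1408.2225 — 5 statements merged into one kernel-verified Lean document; each statement's English description precedes it below -/
import Mathlib

section
/- Let g be a Leibniz algebra over a field K of characteristic zero. Then for all x,y,z ∈ g, the Jacobiator J_{x,y,z} of the skew-symmetrized bracket lies in the left center Z(g), i.e. [J_{x,y,z}, w] = 0 for every w ∈ g. -/
/-- The skew-symmetrization `⟨x,y⟩ = ½([x,y] − [y,x])` of a bilinear bracket. -/
def skewBracket {K : Type*} [Field K] {g : Type*} [AddCommGroup g] [Module K g]
    (b : g →ₗ[K] g →ₗ[K] g) (x y : g) : g :=
  (2 : K)⁻¹ • (b x y - b y x)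

/-- The Jacobiator `J_{x,y,z} = ⟨x,⟨y,z⟩⟩ + ⟨y,⟨z,x⟩⟩ + ⟨z,⟨x,y⟩⟩` of the
skew-symmetrized bracket. -/
def jacobiator {K : Type*} [Field K] {g : Type*} [AddCommGroup g] [Module K g]
    (b : g →ₗ[K] g →ₗ[K] g) (x y z : g) : g :=
  skewBracket b x (skewBracket b y z) + skewBracket b y (skewBracket b z x) +
    skewBracket b z (skewBracket b x y)

/-- For a Leibniz algebra `g` over a field of characteristic zero,
the Jacobiator `J_{x,y,z}` lies in the left center: `[J_{x,y,z}, w] = 0` for all `w`. -/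
theorem jacobiator_mem_left_center
    {K : Type*} [Field K] [CharZero K]
    {g : Type*} [AddCommGroup g] [Module K g]
    (b : g →ₗ[K] g →ₗ[K] g)
    (leib : ∀ x y z : g, b x (b y z) = b (b x y) z + b y (b x z)) :
    ∀ x y z w : g, b (jacobiator b x y z) w = 0 := by
  have leib' : ∀ u v w : g, b (b u v) w = b u (b v w) - b v (b u w) := by
    intro u v w; rw [leib u v w]; abel
  intro x y z w
  simp only [jacobiator, skewBracket, map_smul, map_sub, map_add,
    LinearMap.smul_apply, LinearMap.sub_apply, LinearMap.add_apply]
  simp only [map_sub, LinearMap.sub_apply, leib']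
  module
end

section
/- Let g be a Leibniz algebra over a field K of characteristic zero. Then for all x,y,z,w ∈ g: ⟨x,J_{y,z,w}⟩ − ⟨y,J_{x,z,w}⟩ + ⟨z,J_{x,y,w}⟩ − ⟨w,J_{x,y,z}⟩ − J_{⟨x,y⟩,z,w} + J_{⟨x,z⟩,y,w} − J_{⟨x,w⟩,y,z} − J_{⟨y,z⟩,x,w} + J_{⟨y,w⟩,x,z} − J_{⟨z,w⟩,x,y} = 0. -/
set_option maxHeartbeats 1000000 in
/-- For a Leibniz algebra `g` over a field of characteristic zero, the
Jacobiator of the skew-symmetrized bracket is "closed":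
`⟨x,J_{y,z,w}⟩ − ⟨y,J_{x,z,w}⟩ + ⟨z,J_{x,y,w}⟩ − ⟨w,J_{x,y,z}⟩ − J_{⟨x,y⟩,z,w}
 + J_{⟨x,z⟩,y,w} − J_{⟨x,w⟩,y,z} − J_{⟨y,z⟩,x,w} + J_{⟨y,w⟩,x,z} − J_{⟨z,w⟩,x,y} = 0`. -/
theorem jacobiator_closed
    {K : Type*} [Field K] [CharZero K]
    {g : Type*} [AddCommGroup g] [Module K g]
    (b : g →ₗ[K] g →ₗ[K] g)
    (leib : ∀ x y z : g, b x (b y z) = b (b x y) z + b y (b x z)) :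
    ∀ x y z w : g,
      skewBracket b x (jacobiator b y z w) - skewBracket b y (jacobiator b x z w)
        + skewBracket b z (jacobiator b x y w) - skewBracket b w (jacobiator b x y z)
        - jacobiator b (skewBracket b x y) z w + jacobiator b (skewBracket b x z) y w
        - jacobiator b (skewBracket b x w) y z - jacobiator b (skewBracket b y z) x w
        + jacobiator b (skewBracket b y w) x z - jacobiator b (skewBracket b z w) x y
      = 0 := by
  intro x y z w
  simp only [skewBracket, jacobiator, map_add, map_sub, map_smul, LinearMap.add_apply,
    LinearMap.sub_apply, LinearMap.smul_apply]
  module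
end

section
/- Let g be a Leibniz algebra over a field K of characteristic zero. Then for all x,y ∈ g and c ∈ Z(g): (1/4)[x,[y,c]] − (1/4)[y,[x,c]] − (1/2)[⟨x,y⟩, c] = J_{x,y,c}. (This is condition (d) of the Lie 2-algebra structure obtained by skew-symmetrization, with l₂(x,c) = (1/2)[x,c] for c ∈ Z(g) and l₃ = J.) -/
/-- For a Leibniz algebra `g` over a field of characteristic zero, for all
`x, y ∈ g` and `c` in the left center `Z(g)`:
`¼[x,[y,c]] − ¼[y,[x,c]] − ½[⟨x,y⟩,c] = J_{x,y,c}`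
(condition (d) of the skew-symmetrized Lie 2-algebra structure). -/
theorem lie2_condition_d
    {K : Type*} [Field K] [CharZero K]
    {g : Type*} [AddCommGroup g] [Module K g]
    (b : g →ₗ[K] g →ₗ[K] g)
    (leib : ∀ x y z : g, b x (b y z) = b (b x y) z + b y (b x z)) :
    ∀ x y c : g, (∀ w : g, b c w = 0) →
      (4 : K)⁻¹ • b x (b y c) - (4 : K)⁻¹ • b y (b x c)
        - (2 : K)⁻¹ • b (skewBracket b x y) c
      = jacobiator b x y c := by
  intro x y c hc
  have hQ : b (b y c) x = 0 := by
    have := leib y c x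
    simpa [hc] using this.symm
  have hR : b (b x c) y = 0 := by
    have := leib x c y
    simpa [hc] using this.symm
  simp only [jacobiator, skewBracket, map_smul, map_sub, map_neg, LinearMap.smul_apply,
    LinearMap.sub_apply, LinearMap.neg_apply, hc, map_zero, LinearMap.zero_apply,
    sub_zero, zero_sub, smul_neg, hQ, hR]
  rw [leib x y c]
  have h4 : (4 : K)⁻¹ = (2:K)⁻¹ * (2:K)⁻¹ := by norm_num
  rw [h4]
  module
end

section
/- Let g be a Leibniz algebra over a field K and (V,l,r) a representation of g. Then for all x,y,z ∈ g and u,v ∈ V: l_x(r_z v) − l_y(r_z u) − r_z(l_x v) + r_{[y,z]}(u) − r_{[x,z]}(v) − r_z(r_y u) = 0. (Equivalently, the map r̄(x+u, y+v) = r_y u satisfies the Maurer–Cartan equation ∂r̄ − (1/2)[r̄,r̄] = 0 on the semidirect product Leibniz algebra g ⋉_{(l,0)} V, so that g ⋉_{(l,r)} V is a deformation of g ⋉_{(l,0)} V by the Maurer–Cartan element r̄.) -/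
/-- for a representation `(V,l,r)` of a Leibniz algebra `g`, for all
`x,y,z ∈ g` and `u,v ∈ V`:
`l_x(r_z v) − l_y(r_z u) − r_z(l_x v) + r_{[y,z]}u − r_{[x,z]}v − r_z(r_y u) = 0`,
i.e. `r̄` satisfies the Maurer–Cartan equation `∂r̄ − ½[r̄,r̄] = 0` on `g ⋉_{(l,0)} V`. -/
theorem maurer_cartan_rbar
    {K : Type*} [Field K] {g V : Type*} [AddCommGroup g] [Module K g]
    [AddCommGroup V] [Module K V]
    (b : g →ₗ[K] g →ₗ[K] g)
    (leib : ∀ x y z : g, b x (b y z) = b (b x y) z + b y (b x z))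
    (l r : g →ₗ[K] Module.End K V)
    (hl : ∀ x y : g, l (b x y) = l x * l y - l y * l x)
    (hr : ∀ x y : g, r (b x y) = l x * r y - r y * l x)
    (hrl : ∀ x y : g, r y * l x = -(r y * r x)) :
    ∀ (x y z : g) (u v : V),
      l x (r z v) - l y (r z u) - r z (l x v) + r (b y z) u - r (b x z) v
        - r z (r y u) = 0 := by
  intro x y z u v
  have h1 := LinearMap.congr_fun (hr x z) v
  have h2 := LinearMap.congr_fun (hr y z) u
  have h3 := LinearMap.congr_fun (hrl y z) u
  simp only [Module.End.mul_apply, LinearMap.sub_apply, LinearMap.neg_apply] at h1 h2 h3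
  rw [h1, h2, show (r z) ((l y) u) = -((r z) ((r y) u)) from h3]
  abel
end

section
/- Let g be a Leibniz algebra over a field K, V a K-vector space, φ : V → End(V) a linear map satisfying φ(u)∘φ(v) − φ(v)∘φ(u) = φ(φ(u)v) for all u,v ∈ V, and θ : g → V a linear map such that ρ = (φ∘θ, θ) : g → End(V) ⊕ V is a Leibniz algebra homomorphism into the omni-Lie algebra ol(V) (so the image of ρ lies in the graph G_φ). Define l, r : g → End(V) by l_x(u) = φ(θ(x))(u) and r_x(u) = φ(u)(θ(x)). Then (V, l, r) is a representation of g: l_{[x,y]} = l_x∘l_y − l_y∘l_x, r_{[x,y]} = l_x∘r_y − r_y∘l_x, and r_y∘l_x = −r_y∘r_x for all x,y ∈ g. -/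
/-- The omni-Lie bracket `⟦(A,u),(B,v)⟧ = (A∘B − B∘A, A v)` on `End(V) ⊕ V`. -/
def omniBracket {K : Type*} [Field K] {V : Type*} [AddCommGroup V] [Module K V]
    (e₁ e₂ : Module.End K V × V) : Module.End K V × V :=
  (e₁.1 * e₂.1 - e₂.1 * e₁.1, e₁.1 e₂.2)

/-- let `g` be a Leibniz algebra, `φ : V → End(V)` linear with
`φ(u)∘φ(v) − φ(v)∘φ(u) = φ(φ(u)v)`, and `θ : g → V` linear such that
`ρ = (φ∘θ, θ) : g → ol(V)` is a Leibniz algebra homomorphism (so `im ρ ⊆ G_φ`). Then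
`l_x(u) = φ(θ(x))u`, `r_x(u) = φ(u)(θ(x))` define a representation `(V,l,r)` of `g`:
`l_{[x,y]} = l_x∘l_y − l_y∘l_x`, `r_{[x,y]} = l_x∘r_y − r_y∘l_x`, `r_y∘l_x = −r_y∘r_x`
(stated pointwise). -/
theorem graph_naive_rep_gives_representation
    {K : Type*} [Field K] {g V : Type*} [AddCommGroup g] [Module K g]
    [AddCommGroup V] [Module K V]
    (b : g →ₗ[K] g →ₗ[K] g)
    (leib : ∀ x y z : g, b x (b y z) = b (b x y) z + b y (b x z))
    (φ : V →ₗ[K] Module.End K V)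
    (hφ : ∀ u v : V, φ u * φ v - φ v * φ u = φ (φ u v))
    (θ : g →ₗ[K] V)
    (hρ : ∀ x y : g,
        (φ (θ (b x y)), θ (b x y)) = omniBracket (φ (θ x), θ x) (φ (θ y), θ y)) :
    (∀ (x y : g) (u : V),
        φ (θ (b x y)) u = φ (θ x) (φ (θ y) u) - φ (θ y) (φ (θ x) u)) ∧
    (∀ (x y : g) (u : V),
        φ u (θ (b x y)) = φ (θ x) (φ u (θ y)) - φ (φ (θ x) u) (θ y)) ∧
    (∀ (x y : g) (u : V),
        φ (φ (θ x) u) (θ y) = -φ (φ u (θ x)) (θ y)) := by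
  have h1 : ∀ x y : g, φ (θ (b x y)) = φ (θ x) * φ (θ y) - φ (θ y) * φ (θ x) :=
    fun x y => congrArg Prod.fst (hρ x y)
  have h2 : ∀ x y : g, θ (b x y) = φ (θ x) (θ y) :=
    fun x y => congrArg Prod.snd (hρ x y)
  have h3 : ∀ u v : V, φ (φ u v) + φ (φ v u) = 0 := by
    intro u v
    rw [← hφ u v, ← hφ v u]; abel
  refine ⟨fun x y u => ?_, fun x y u => ?_, fun x y u => ?_⟩
  · rw [h1]; simp [LinearMap.sub_apply, Module.End.mul_apply]
  · rw [h2 x y]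
    have := congrArg (fun F : Module.End K V => F (θ y)) (hφ (θ x) u)
    simp only [LinearMap.sub_apply, Module.End.mul_apply] at this
    rw [← this]; abel
  · have := congrArg (fun F : Module.End K V => F (θ y)) (h3 (θ x) u)
    simp only [LinearMap.add_apply, LinearMap.zero_apply] at this
    exact eq_neg_of_add_eq_zero_left this
end
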